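/- If Δ is a simplicial tree with at least two facets and F is a leaf of Δ with joint G (i.e., F ∩ (Δ \ F) ⊆ G), then Δ collapses to Δ \ F, the subcomplex generated by the remaining facets. -/

import Mathlib

/-!
Connectedness gives a vertex `a ∈ F ∩ G`. The faces of `Δ` that lie in no facet other than `F`
are exactly the faces of `F` not contained in `G`. They form an upward-closed family, and since
`a ∈ F ∩ G` it is closed under adding and removing `a`, so it splits into pairs `{σ, σ ∪ {a}}`.
Removing these pairs from the largest down is a sequence of elementary collapses: when a pair
is removed, `σ` lies in no remaining face other than `σ ∪ {a}`.
-/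

noncomputable section
attribute [local instance] Classical.propDecidable

/-- The simplicial complex generated by a set of faces: all nonempty subsets. -/
def gen {V : Type} (S : Finset (Finset V)) : Finset (Finset V) :=
  S.biUnion fun F => F.powerset.filter (· ≠ ∅)

/-- The facets (maximal faces) of a complex given by its finite set of faces. -/
def facets {V : Type} (Δ : Finset (Finset V)) : Finset (Finset V) :=
  Δ.filter fun F => ∀ G ∈ Δ, F ⊆ G → F = G

/-- A (finite, abstract) simplicial complex: nonempty faces, closed under nonempty subsets. -/
def IsComplex {V : Type} (Δ : Finset (Finset V)) : Prop :=
  ∅ ∉ Δ ∧ ∀ F ∈ Δ, ∀ G, G ⊆ F → G ≠ ∅ → G ∈ Δ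

/-- `F` is a leaf of `Δ`: `F` is a facet which is either the only facet, or
there is another facet `G` (a joint) with `F ∩ (Δ ∖ F) ⊆ G`, i.e. the
intersection of `F` with any other facet is contained in `G`. -/
def IsLeaf {V : Type} (Δ : Finset (Finset V)) (F : Finset V) : Prop :=
  F ∈ facets Δ ∧ (facets Δ = {F} ∨
    ∃ G ∈ facets Δ, G ≠ F ∧ ∀ H ∈ facets Δ, H ≠ F → F ∩ H ⊆ G)

def HasLeaf {V : Type} (Δ : Finset (Finset V)) : Prop := ∃ F, IsLeaf Δ F

/-- A forest: every nonempty subcollection (complex generated by a subset of the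
facets) has a leaf. -/
def IsForest {V : Type} (Δ : Finset (Finset V)) : Prop :=
  ∀ S ⊆ facets Δ, S.Nonempty → HasLeaf (gen S)

/-- Vertex set of a complex. -/
def vtx {V : Type} (Δ : Finset (Finset V)) : Finset V := Δ.sup id

/-- Connectedness: nonempty, and any two vertices are joined by a chain of faces. -/
def Conn {V : Type} (Δ : Finset (Finset V)) : Prop :=
  Δ.Nonempty ∧ ∀ u ∈ vtx Δ, ∀ v ∈ vtx Δ,
    Relation.ReflTransGen (fun a b => ∃ σ ∈ Δ, a ∈ σ ∧ b ∈ σ) u v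

/-- A simplicial tree is a connected forest. -/
def IsTree {V : Type} (Δ : Finset (Finset V)) : Prop := Conn Δ ∧ IsForest Δ

/-- An elementary collapse: remove a pair `{F, F'}` where `F'` is a maximal proper
face of the facet `F` and `F'` is a face of no other facet. -/
def ElemCollapse {V : Type} (Δ Δ' : Finset (Finset V)) : Prop :=
  ∃ F F', F ∈ facets Δ ∧ F' ∈ Δ ∧ F' ⊆ F ∧ F'.card + 1 = F.card ∧
    (∀ G ∈ facets Δ, F' ⊆ G → G = F) ∧ Δ' = Δ \ {F, F'}

/-- `Δ` collapses to `Δ'` via a finite sequence of elementary collapses. -/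
def CollapsesTo {V : Type} (Δ Δ' : Finset (Finset V)) : Prop :=
  Relation.ReflTransGen ElemCollapse Δ Δ'

/-- A complex is collapsible if it collapses to a single point. -/
def Collapsible {V : Type} (Δ : Finset (Finset V)) : Prop :=
  ∃ v : V, CollapsesTo Δ {{v}}

/-- The full simplex on a finite vertex set `F` : all nonempty subsets of `F`. -/
def fullSimplex {V : Type} (F : Finset V) : Finset (Finset V) :=
  F.powerset.filter (· ≠ ∅)

open Finset

variable {V : Type}

theorem mem_of_mem_facets {Δ : Finset (Finset V)} {F : Finset V} (hF : F ∈ facets Δ) : F ∈ Δ :=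
  (mem_filter.1 hF).1

theorem exists_mem_facets_superset {Δ : Finset (Finset V)} {σ : Finset V} (hσ : σ ∈ Δ) :
    ∃ H ∈ facets Δ, σ ⊆ H := by
  obtain ⟨H, hH, hmax⟩ :=
    exists_maximal (s := Δ.filter (σ ⊆ ·)) ⟨σ, mem_filter.2 ⟨hσ, subset_rfl⟩⟩
  rw [mem_filter] at hH
  refine ⟨H, mem_filter.2 ⟨hH.1, fun K hK hHK => ?_⟩, hH.2⟩
  exact le_antisymm hHK (hmax (mem_filter.2 ⟨hK, hH.2.trans hHK⟩) hHK)

theorem elemCollapse_sdiff_pair {Δ : Finset (Finset V)} {σ : Finset V} {a : V}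
    (ha : a ∉ σ) (hσ : σ ∈ Δ) (haσ : insert a σ ∈ Δ)
    (hfree : ∀ ρ ∈ Δ, σ ⊆ ρ → ρ ∈ ({insert a σ, σ} : Finset (Finset V))) :
    ElemCollapse Δ (Δ \ {insert a σ, σ}) := by
  have hne : insert a σ ≠ σ := fun h => ha (h ▸ mem_insert_self a σ)
  have hfacet : insert a σ ∈ facets Δ := by
    refine mem_filter.2 ⟨haσ, fun K hK hsub => ?_⟩
    rcases mem_insert.1 (hfree K hK ((subset_insert a σ).trans hsub)) with h | h
    · exact h.symm
    · exact absurd (mem_singleton.1 h ▸ hsub) (not_subset.2 ⟨a, mem_insert_self a σ, ha⟩)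
  refine ⟨insert a σ, σ, hfacet, hσ, subset_insert a σ, (card_insert_of_notMem ha).symm,
    fun K hK hσK => ?_, rfl⟩
  rcases mem_insert.1 (hfree K (mem_of_mem_facets hK) hσK) with h | h
  · exact h
  · obtain rfl := mem_singleton.1 h
    exact absurd ((mem_filter.1 hK).2 _ haσ (subset_insert a K)) hne.symm

theorem eq_insert_or_eq_of_erase_eq {σ τ : Finset V} {a : V} (h : τ.erase a = σ) :
    τ ∈ ({insert a σ, σ} : Finset (Finset V)) := by
  by_cases ha : a ∈ τ
  · simp [← h, insert_erase ha]
  · simp [← h, erase_eq_of_notMem ha]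

/-- The pair `{σ, insert a σ}` with `σ` of least size is removed last: by then every larger
face of `R` is gone, so `σ` is free. -/
theorem collapsesTo_sdiff_of_cone (a : V) {Δ : Finset (Finset V)} (R : Finset (Finset V))
    (hRΔ : R ⊆ Δ) (hup : ∀ σ ∈ R, ∀ ρ ∈ Δ, σ ⊆ ρ → ρ ∈ R)
    (hins : ∀ σ ∈ R, insert a σ ∈ R) (hera : ∀ σ ∈ R, σ.erase a ∈ R) :
    CollapsesTo Δ (Δ \ R) := by
  induction R using strongInduction with
  | H R ih =>
  rcases R.eq_empty_or_nonempty with rfl | hR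
  · rw [sdiff_empty]
    exact Relation.ReflTransGen.refl
  obtain ⟨σ, hσR, hmin⟩ := R.exists_min_image card hR
  have ha : a ∉ σ := fun ha => (card_erase_lt_of_mem ha).not_ge (hmin _ (hera σ hσR))
  set P : Finset (Finset V) := {insert a σ, σ}
  have hPR : P ⊆ R := by simp [P, insert_subset_iff, hσR, hins σ hσR]
  have hP : ∀ τ ∈ R, τ ⊆ insert a σ → τ ∈ P := fun τ hτ hsub =>
    eq_insert_or_eq_of_erase_eq <| eq_of_subset_of_card_le
      (by simpa [erase_insert ha] using erase_subset_erase a hsub) (hmin _ (hera τ hτ))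
  have hPsub : ∀ ρ ∈ P, ρ ⊆ insert a σ := by simp [P, subset_insert]
  have hR' : R \ P ⊂ R := sdiff_ssubset hPR ⟨σ, by simp [P]⟩
  have hcoll : CollapsesTo Δ (Δ \ (R \ P)) := by
    refine ih _ hR' (sdiff_subset.trans hRΔ) ?_ ?_ ?_ <;> simp only [mem_sdiff]
    · exact fun τ hτ ρ hρ hτρ => ⟨hup τ hτ.1 ρ hρ hτρ,
        fun hρP => hτ.2 (hP τ hτ.1 (hτρ.trans (hPsub ρ hρP)))⟩
    · exact fun τ hτ => ⟨hins τ hτ.1, fun h => hτ.2 (hP τ hτ.1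
        ((subset_insert a τ).trans (hPsub _ h)))⟩
    · refine fun τ hτ => ⟨hera τ hτ.1, fun h => hτ.2 (hP τ hτ.1 ?_)⟩
      simpa using (insert_erase_subset a τ).trans (insert_subset_insert a (hPsub _ h))
  have hstep : ElemCollapse (Δ \ (R \ P)) ((Δ \ (R \ P)) \ P) := by
    have hPΔ : ∀ ρ ∈ P, ρ ∈ Δ \ (R \ P) := fun ρ hρ =>
      mem_sdiff.2 ⟨hRΔ (hPR hρ), fun h => (mem_sdiff.1 h).2 hρ⟩
    refine elemCollapse_sdiff_pair ha (hPΔ σ (by simp [P])) (hPΔ _ (by simp [P])) ?_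
    intro ρ hρ hσρ
    rw [mem_sdiff, mem_sdiff, not_and_not_right] at hρ
    exact hρ.2 (hup σ hσR ρ hρ.1 hσρ)
  rw [sdiff_sdiff_left, sup_eq_union, sdiff_union_of_subset hPR] at hstep
  exact hcoll.tail hstep

theorem Conn.vtx_subset_of_closed {Δ : Finset (Finset V)} (hconn : Conn Δ) {S : Finset V}
    (hS : ∀ σ ∈ Δ, ∀ x ∈ σ, x ∈ S → σ ⊆ S) {u : V} (hu : u ∈ vtx Δ) (huS : u ∈ S) :
    vtx Δ ⊆ S := by
  intro v hv
  exact (hconn.2 u hu v hv).rec (motive := fun b _ => b ∈ S) huS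
    fun _ ⟨σ, hσ, hb, hc⟩ ih => hS σ hσ _ hb ih hc

theorem mem_gen {S : Finset (Finset V)} {ρ : Finset V} :
    ρ ∈ gen S ↔ ∃ H ∈ S, ρ ⊆ H ∧ ρ ≠ ∅ := by
  simp [gen]

section Leaf

variable {Δ : Finset (Finset V)} {F G : Finset V}

def leafFaces (Δ : Finset (Finset V)) (F G : Finset V) : Finset (Finset V) :=
  Δ.filter fun ρ => ρ ⊆ F ∧ ¬ ρ ⊆ G

theorem mem_leafFaces {ρ : Finset V} : ρ ∈ leafFaces Δ F G ↔ ρ ∈ Δ ∧ ρ ⊆ F ∧ ¬ ρ ⊆ G :=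
  mem_filter

variable (hjoint : ∀ H ∈ facets Δ, H ≠ F → F ∩ H ⊆ G)
include hjoint

theorem subset_of_inter_not_subset_joint {ρ : Finset V} (hρ : ρ ∈ Δ) (h : ¬ F ∩ ρ ⊆ G) :
    ρ ⊆ F := by
  obtain ⟨H, hH, hρH⟩ := exists_mem_facets_superset hρ
  by_cases hHF : H = F
  · exact hHF ▸ hρH
  · exact absurd ((inter_subset_inter_left hρH).trans (hjoint H hH hHF)) h

/-- If `F` missed `G`, every face meeting `F` would lie in `F`, cutting `F` off from `G`. -/
theorem inter_joint_nonempty (hΔ : IsComplex Δ) (hconn : Conn Δ) (hF : F ∈ Δ) (hG : G ∈ Δ) :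
    (F ∩ G).Nonempty := by
  rw [← not_disjoint_iff_nonempty_inter]
  intro hdisj
  have hclosed : ∀ σ ∈ Δ, ∀ x ∈ σ, x ∈ F → σ ⊆ F := fun σ hσ x hxσ hxF =>
    subset_of_inter_not_subset_joint hjoint hσ fun h =>
      disjoint_left.1 hdisj hxF (h (mem_inter.2 ⟨hxF, hxσ⟩))
  obtain ⟨u, hu⟩ := nonempty_iff_ne_empty.2 fun h => hΔ.1 (h ▸ hF)
  obtain ⟨v, hv⟩ := nonempty_iff_ne_empty.2 fun h => hΔ.1 (h ▸ hG)
  exact disjoint_left.1 hdisj (hconn.vtx_subset_of_closed hclosed (mem_sup.2 ⟨F, hF, hu⟩) hu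
    (mem_sup.2 ⟨G, hG, hv⟩)) hv

theorem sdiff_leafFaces_eq_gen (hΔ : IsComplex Δ) (hG : G ∈ facets Δ) (hGF : G ≠ F) :
    Δ \ leafFaces Δ F G = gen (facets Δ \ {F}) := by
  ext ρ
  simp only [mem_sdiff, mem_leafFaces, mem_gen, mem_singleton, not_and, not_not]
  constructor
  · rintro ⟨hρ, hFG⟩
    have hne : ρ ≠ ∅ := fun h => hΔ.1 (h ▸ hρ)
    by_cases hρF : ρ ⊆ F
    · exact ⟨G, ⟨hG, hGF⟩, hFG hρ hρF, hne⟩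
    · obtain ⟨H, hH, hρH⟩ := exists_mem_facets_superset hρ
      exact ⟨H, ⟨hH, fun h => hρF (h ▸ hρH)⟩, hρH, hne⟩
  · rintro ⟨H, ⟨hH, hHF⟩, hρH, hne⟩
    exact ⟨hΔ.2 H (mem_of_mem_facets hH) ρ hρH hne,
      fun _ hρF => (subset_inter hρF hρH).trans (hjoint H hH hHF)⟩

theorem collapsesTo_sdiff_leafFaces (hΔ : IsComplex Δ) (hF : F ∈ Δ) {a : V} (haF : a ∈ F)
    (haG : a ∈ G) : CollapsesTo Δ (Δ \ leafFaces Δ F G) := by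
  refine collapsesTo_sdiff_of_cone a _ (filter_subset _ _) ?_ ?_ ?_ <;> simp only [mem_leafFaces]
  · rintro σ ⟨-, hσF, hσG⟩ ρ hρ hσρ
    exact ⟨hρ, subset_of_inter_not_subset_joint hjoint hρ
      fun h => hσG ((subset_inter hσF hσρ).trans h), fun h => hσG (hσρ.trans h)⟩
  · rintro σ ⟨-, hσF, hσG⟩
    have haσF := insert_subset haF hσF
    exact ⟨hΔ.2 F hF _ haσF (insert_nonempty a σ).ne_empty, haσF,
      fun h => hσG ((subset_insert a σ).trans h)⟩
  · rintro σ ⟨hσ, hσF, hσG⟩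
    have hG' : ¬ σ.erase a ⊆ G := fun h =>
      hσG ((insert_erase_subset a σ).trans (insert_subset haG h))
    exact ⟨hΔ.2 σ hσ _ (erase_subset a σ) (fun h => hG' (h ▸ empty_subset G)),
      (erase_subset a σ).trans hσF, hG'⟩

end Leaf

theorem tree_collapses_to_remove_leaf_general {V : Type} (Δ : Finset (Finset V))
    (hΔ : IsComplex Δ) (hT : IsTree Δ)
    (F G : Finset V) (hF : F ∈ facets Δ) (hG : G ∈ facets Δ) (hGF : G ≠ F)
    (hjoint : ∀ H ∈ facets Δ, H ≠ F → F ∩ H ⊆ G) :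
    CollapsesTo Δ (gen (facets Δ \ {F})) := by
  have hFΔ := mem_of_mem_facets hF
  obtain ⟨a, ha⟩ := inter_joint_nonempty hjoint hΔ hT.1 hFΔ (mem_of_mem_facets hG)
  rw [← sdiff_leafFaces_eq_gen hjoint hΔ hG hGF]
  exact collapsesTo_sdiff_leafFaces hjoint hΔ hFΔ (mem_inter.1 ha).1 (mem_inter.1 ha).2

/-- If `Δ` is a simplicial tree with at least two facets and `F` is a
leaf of `Δ` with joint `G` (i.e. `F ∩ (Δ ∖ F) ⊆ G`), then `Δ` collapses to the
subcomplex `Δ ∖ F` generated by the remaining facets. -/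
theorem tree_collapses_to_remove_leaf {V : Type} (Δ : Finset (Finset V))
    (hΔ : IsComplex Δ) (hT : IsTree Δ) (h2 : 2 ≤ (facets Δ).card)
    (F G : Finset V) (hF : F ∈ facets Δ) (hG : G ∈ facets Δ) (hGF : G ≠ F)
    (hjoint : ∀ H ∈ facets Δ, H ≠ F → F ∩ H ⊆ G) :
    CollapsesTo Δ (gen (facets Δ \ {F})) :=
  tree_collapses_to_remove_leaf_general Δ hΔ hT F G hF hG hGF hjoint
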